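/- arXiv:1104.4316 — 2 statements merged into one kernel-verified Lean document; each statement's English description precedes it below -/
import Mathlib

section
/- Let l, r be positive integers, n = 2l+1, and let ξ = (ξ_1,…,ξ_l) be a partition with ξ_1 ≥ ⋯ ≥ ξ_l ≥ 0 and ξ_1 + ⋯ + ξ_l = r − s, where 0 ≤ s ≤ r. Then the fiber of π over ξ is exactly the set of tuples (ξ_1+ν_1, …, ξ_l+ν_l, s−2t, ν_l, …, ν_1) as t ranges over integers with 0 ≤ 2t ≤ s and ν = (ν_1,…,ν_l) ranges over Λ(l,t); in particular the fiber π^{-1}(ξ) has cardinality Σ_{0 ≤ 2t ≤ s} |Λ(l,t)|. -/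
set_option maxHeartbeats 1000000


/-- For `n = 2l+1`, the map `π : Λ(n,r) → ℤ^l` given by
`π(λ) = (λ_1 − λ_{1'}, …, λ_l − λ_{l'})`, where `i' = n+1−i` (one-based),
i.e. `i' = 2l−i` in zero-based indexing. -/
def piOdd (l : ℕ) (lam : Fin (2 * l + 1) → ℕ) : Fin l → ℤ :=
  fun i => (lam ⟨i.val, by have := i.isLt; omega⟩ : ℤ)
    - (lam ⟨2 * l - i.val, by have := i.isLt; omega⟩ : ℤ)

/-- The tuple `(ξ_1+ν_1, …, ξ_l+ν_l, s−2t, ν_l, …, ν_1)`, i.e.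
`(ξ+ν) ∥ (s−2t) ∥ ν*` where `ν*` is the reverse of `ν`. -/
def glueOdd (l s t : ℕ) (ξ : Fin l → ℤ) (ν : Fin l → ℕ) : Fin (2 * l + 1) → ℕ :=
  fun j =>
    if h : j.val < l then (ξ ⟨j.val, h⟩).toNat + ν ⟨j.val, h⟩
    else if h' : j.val = l then s - 2 * t
    else ν ⟨2 * l - j.val, by have := j.isLt; omega⟩

lemma sum_range_split (l : ℕ) (g : ℕ → ℕ) :
    ∑ j ∈ Finset.range (2 * l + 1), g j
      = (∑ j ∈ Finset.range l, g j) + g l + ∑ j ∈ Finset.range l, g (2 * l - j) := by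
  have key : ∑ i ∈ Finset.range l, g (l + (i + 1))
      = ∑ j ∈ Finset.range l, g (2 * l - j) := by
    rw [← Finset.sum_range_reflect (fun j => g (2 * l - j)) l]
    refine Finset.sum_congr rfl fun i hi => ?_
    rw [Finset.mem_range] at hi
    congr 1
    omega
  rw [show 2 * l + 1 = l + (l + 1) by omega, Finset.sum_range_add,
    Finset.sum_range_succ' (fun i => g (l + i)) l]
  simp only [add_zero]
  rw [key]
  omega

lemma sum_fin_split (l : ℕ) (lam : Fin (2 * l + 1) → ℕ) :
    ∑ j, lam j = (∑ i : Fin l, lam ⟨i.val, by have := i.isLt; omega⟩)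
      + lam ⟨l, by omega⟩
      + ∑ i : Fin l, lam ⟨2 * l - i.val, by have := i.isLt; omega⟩ := by
  set g : ℕ → ℕ := fun j => if h : j < 2 * l + 1 then lam ⟨j, h⟩ else 0 with hg
  have h0 : ∑ j, lam j = ∑ j ∈ Finset.range (2 * l + 1), g j := by
    rw [← Fin.sum_univ_eq_sum_range]
    refine Finset.sum_congr rfl fun i _ => ?_
    simp [hg, Nat.le_of_lt_succ i.isLt]
  have h1 : ∑ j ∈ Finset.range l, g j
      = ∑ i : Fin l, lam ⟨i.val, by have := i.isLt; omega⟩ := by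
    rw [← Fin.sum_univ_eq_sum_range (fun j => g j) l]
    refine Finset.sum_congr rfl fun i _ => ?_
    have : i.val < 2 * l + 1 := by have := i.isLt; omega
    simp [hg, Nat.le_of_lt_succ this]
  have h2 : g l = lam ⟨l, by omega⟩ := by
    have : l < 2 * l + 1 := by omega
    simp [hg, Nat.le_of_lt_succ this]
  have h3 : ∑ j ∈ Finset.range l, g (2 * l - j)
      = ∑ i : Fin l, lam ⟨2 * l - i.val, by have := i.isLt; omega⟩ := by
    have e1 : ∑ i : Fin l, lam ⟨2 * l - i.val, by have := i.isLt; omega⟩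
        = ∑ i : Fin l, g (2 * l - i.val) := by
      refine Finset.sum_congr rfl fun i _ => ?_
      have : 2 * l - i.val < 2 * l + 1 := by omega
      simp [hg, this]
    rw [e1]
    exact (Fin.sum_univ_eq_sum_range (fun j => g (2 * l - j)) l).symm
  rw [h0, sum_range_split, h1, h2, h3]

lemma glueOdd_head (l s t : ℕ) (ξ : Fin l → ℤ) (ν : Fin l → ℕ) (i : Fin l) :
    glueOdd l s t ξ ν ⟨i.val, by have := i.isLt; omega⟩ = (ξ i).toNat + ν i := by
  simp [glueOdd, i.isLt]

lemma glueOdd_mid (l s t : ℕ) (ξ : Fin l → ℤ) (ν : Fin l → ℕ) :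
    glueOdd l s t ξ ν ⟨l, by omega⟩ = s - 2 * t := by
  simp [glueOdd]

lemma glueOdd_tail (l s t : ℕ) (ξ : Fin l → ℤ) (ν : Fin l → ℕ) (i : Fin l) :
    glueOdd l s t ξ ν ⟨2 * l - i.val, by have := i.isLt; omega⟩ = ν i := by
  have hi := i.isLt
  have h1 : ¬ (2 * l - i.val < l) := by omega
  have h2 : ¬ (2 * l - i.val = l) := by omega
  simp only [glueOdd, dif_neg h1, dif_neg h2]
  congr 1
  ext
  simp
  omega

lemma glueOdd_injective (l s t : ℕ) (ξ : Fin l → ℤ) :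
    Function.Injective (glueOdd l s t ξ) := by
  intro ν ν' h
  funext i
  have := congrFun h ⟨2 * l - i.val, by have := i.isLt; omega⟩
  rwa [glueOdd_tail, glueOdd_tail] at this

/-- for `n = 2l+1` and a partition `ξ` of `r − s` (`0 ≤ s ≤ r`)
into at most `l` parts, the fiber `π⁻¹(ξ)` consists exactly of the tuples
`(ξ+ν) ∥ (s−2t) ∥ ν*` for `0 ≤ 2t ≤ s` and `ν ∈ Λ(l,t)`; in particular it has
cardinality `Σ_{0 ≤ 2t ≤ s} |Λ(l,t)|`. -/
theorem fiber_piOdd_of_partition (l r s : ℕ) (hl : 0 < l) (hr : 0 < r)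
    (hs : s ≤ r) (ξ : Fin l → ℤ)
    (hdec : ∀ i j : Fin l, i ≤ j → ξ j ≤ ξ i) (hnonneg : ∀ i, 0 ≤ ξ i)
    (hsum : ∑ i, ξ i = (r : ℤ) - s) :
    {lam : Fin (2 * l + 1) → ℕ | (∑ j, lam j = r) ∧ piOdd l lam = ξ}
        = {lam : Fin (2 * l + 1) → ℕ | ∃ t : ℕ, 2 * t ≤ s ∧
            ∃ ν : Fin l → ℕ, (∑ i, ν i = t) ∧ lam = glueOdd l s t ξ ν}
      ∧ {lam : Fin (2 * l + 1) → ℕ | (∑ j, lam j = r) ∧ piOdd l lam = ξ}.ncard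
        = ∑ t ∈ Finset.range (s / 2 + 1), {ν : Fin l → ℕ | ∑ i, ν i = t}.ncard := by

  -- common facts
  have hx : ∀ i : Fin l, ((ξ i).toNat : ℤ) = ξ i := fun i => Int.toNat_of_nonneg (hnonneg i)
  have hxsumZ : (∑ i, ((ξ i).toNat : ℤ)) = (r : ℤ) - s := by
    rw [Finset.sum_congr rfl fun i _ => hx i]; exact hsum
  have hxsum : ∑ i, (ξ i).toNat = r - s := by
    have : ((∑ i, (ξ i).toNat : ℕ) : ℤ) = (r : ℤ) - s := by push_cast; exact hxsumZ
    omega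
  have hset : {lam : Fin (2 * l + 1) → ℕ | (∑ j, lam j = r) ∧ piOdd l lam = ξ}
      = {lam : Fin (2 * l + 1) → ℕ | ∃ t : ℕ, 2 * t ≤ s ∧
          ∃ ν : Fin l → ℕ, (∑ i, ν i = t) ∧ lam = glueOdd l s t ξ ν} := by
    ext lam
    simp only [Set.mem_setOf_eq]
    constructor
    · rintro ⟨hsum', hpi⟩
      have hpi' : ∀ i : Fin l,
          (lam ⟨i.val, by have := i.isLt; omega⟩ : ℤ)
            - (lam ⟨2 * l - i.val, by have := i.isLt; omega⟩ : ℤ) = ξ i :=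
        fun i => congrFun hpi i
      set ν : Fin l → ℕ := fun i => lam ⟨2 * l - i.val, by have := i.isLt; omega⟩ with hν
      set T : ℕ := ∑ i, ν i with hT
      have hfirst : ∀ i : Fin l,
          lam ⟨i.val, by have := i.isLt; omega⟩ = (ξ i).toNat + ν i := by
        intro i
        have h1 := hpi' i
        have h2 := hnonneg i
        simp only [hν]
        omega
      have hA : ∑ i : Fin l, lam ⟨i.val, by have := i.isLt; omega⟩ = (r - s) + T := by
        rw [Finset.sum_congr rfl fun i _ => hfirst i, Finset.sum_add_distrib, hxsum, hT]
      have hB := sum_fin_split l lam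
      rw [hsum', hA] at hB
      have hmidval : lam ⟨l, by omega⟩ = s - 2 * T ∧ 2 * T ≤ s := by
        have : ∑ i : Fin l, lam ⟨2 * l - i.val, by have := i.isLt; omega⟩ = T := hT.symm
        omega
      refine ⟨T, hmidval.2, ν, rfl, ?_⟩
      funext j
      rcases lt_trichotomy j.val l with h | h | h
      · have := hfirst ⟨j.val, h⟩
        have e := glueOdd_head l s T ξ ν ⟨j.val, h⟩
        simpa using (this.trans e.symm)
      · have hj : j = ⟨l, by omega⟩ := Fin.ext h
        rw [hj]
        exact (hmidval.1).trans (glueOdd_mid l s T ξ ν).symm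
      · have hjlt := j.isLt
        have hj : j = ⟨2 * l - (2 * l - j.val), by omega⟩ := by
          apply Fin.ext
          show j.val = 2 * l - (2 * l - j.val)
          omega
        have e := glueOdd_tail l s T ξ ν ⟨2 * l - j.val, by omega⟩
        rw [hj]
        refine Eq.trans ?_ e.symm
        simp only [hν]
    · rintro ⟨t, ht, ν, hνt, rfl⟩
      constructor
      · rw [sum_fin_split l (glueOdd l s t ξ ν)]
        have e1 : ∑ i : Fin l, glueOdd l s t ξ ν ⟨i.val, by have := i.isLt; omega⟩
            = (r - s) + t := by
          rw [Finset.sum_congr rfl fun i _ => glueOdd_head l s t ξ ν i,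
            Finset.sum_add_distrib, hxsum, hνt]
        have e2 : ∑ i : Fin l, glueOdd l s t ξ ν ⟨2 * l - i.val, by have := i.isLt; omega⟩
            = t := by
          rw [Finset.sum_congr rfl fun i _ => glueOdd_tail l s t ξ ν i, hνt]
        rw [e1, e2, glueOdd_mid]
        omega
      · funext i
        have h1 := glueOdd_head l s t ξ ν i
        have h2 := glueOdd_tail l s t ξ ν i
        simp only [piOdd, h1, h2]
        push_cast [hx i]
        ring
  refine ⟨hset, ?_⟩
  -- cardinality
  have hAfin : ∀ t : ℕ, ({ν : Fin l → ℕ | ∑ i, ν i = t}).Finite := by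
    intro t
    refine Set.Finite.subset (Set.Finite.pi (fun _ : Fin l => Set.finite_Iic t)) ?_
    intro ν hν
    intro i _
    have : ν i ≤ ∑ j, ν j := Finset.single_le_sum (fun j _ => Nat.zero_le _) (Finset.mem_univ i)
    simpa [Set.mem_setOf_eq.mp hν] using this
  have himg : ∀ t : ℕ, ((glueOdd l s t ξ) '' {ν : Fin l → ℕ | ∑ i, ν i = t}).Finite :=
    fun t => (hAfin t).image _
  set b : ℕ → Finset (Fin (2 * l + 1) → ℕ) := fun t => (himg t).toFinset with hb
  have hbcoe : ∀ t, (b t : Set (Fin (2 * l + 1) → ℕ))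
      = (glueOdd l s t ξ) '' {ν : Fin l → ℕ | ∑ i, ν i = t} :=
    fun t => (himg t).coe_toFinset
  have hunion : {lam : Fin (2 * l + 1) → ℕ | ∃ t : ℕ, 2 * t ≤ s ∧
      ∃ ν : Fin l → ℕ, (∑ i, ν i = t) ∧ lam = glueOdd l s t ξ ν}
      = ((Finset.range (s / 2 + 1)).biUnion b : Finset _) := by
    ext lam
    simp only [Set.mem_setOf_eq, Finset.coe_biUnion, Set.mem_iUnion, Finset.mem_coe,
      Finset.mem_range, hbcoe, Set.mem_image, Set.mem_setOf_eq]
    constructor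
    · rintro ⟨t, ht, ν, hνt, rfl⟩
      exact ⟨t, by omega, ν, hνt, rfl⟩
    · rintro ⟨t, ht, ν, hνt, rfl⟩
      exact ⟨t, by omega, ν, hνt, rfl⟩
  have hdisj : ∀ t ∈ Finset.range (s / 2 + 1), ∀ t' ∈ Finset.range (s / 2 + 1),
      t ≠ t' → Disjoint (b t) (b t') := by
    intro t _ t' _ hne
    rw [Finset.disjoint_left]
    intro lam hlam hlam'
    rw [← Finset.mem_coe, hbcoe] at hlam hlam'
    obtain ⟨ν, hν, rfl⟩ := hlam
    obtain ⟨ν', hν', heq⟩ := hlam'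
    apply hne
    have hnn : ν' = ν := by
      funext i
      have := congrFun heq ⟨2 * l - i.val, by have := i.isLt; omega⟩
      rwa [glueOdd_tail, glueOdd_tail] at this
    rw [← hν, ← hν', hnn]
  have hcard : ∀ t, (b t).card = ({ν : Fin l → ℕ | ∑ i, ν i = t}).ncard := by
    intro t
    rw [← Set.ncard_coe_finset, hbcoe,
      Set.ncard_image_of_injective _ (glueOdd_injective l s t ξ)]
  rw [hset, hunion, Set.ncard_coe_finset, Finset.card_biUnion hdisj]
  exact Finset.sum_congr rfl fun t _ => hcard t
end

section
/- Let k be a field, l a positive integer, n = 2l, and r ≥ 2. For every g ∈ GL_n(k) that preserves the skew-symmetric bilinear form ⟨ , ⟩ (i.e. ⟨gu, gv⟩ = ⟨u, v⟩ for all u, v ∈ k^n), the symplectic contraction operator C' on (k^n)^{⊗r} commutes with the diagonal action of g: C'(g·x) = g·C'(x) for all x ∈ (k^n)^{⊗r}. -/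
open scoped TensorProduct

noncomputable section

variable (k : Type) [Field k]

/-- The `j`-th standard basis vector of `V = k^n`. -/
def stdVec (n : ℕ) (j : Fin n) : Fin n → k := Pi.single j 1

/-- Tensor space `V^{⊗ r}` where `V = k^n`. -/
abbrev TensorSpace (n r : ℕ) := ⨂[k] _ : Fin r, (Fin n → k)

/-- The sign `ε_i`: `1` if `i ≤ l` (one-based), `−1` otherwise. -/
def eps (l : ℕ) (i : Fin (2 * l)) : k := if (i : ℕ) < l then 1 else -1

/-- The skew-symmetric bilinear form on `k^{2l}` with `⟨e_i, e_j⟩ = ε_i δ_{i,j'}`,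
where `i' = n+1−i` (one-based), i.e. `i' = Fin.rev i` (zero-based);
so `⟨u, v⟩ = ∑ i, ε_i u i * v (Fin.rev i)`. -/
def skewForm (l : ℕ) (u v : Fin (2 * l) → k) : k :=
  ∑ i, eps k l i * (u i * v (Fin.rev i))

/-- The symplectic contraction operator `C'` on `V^{⊗r}`: the unique linear map
with `C'(v₁ ⊗ v₂ ⊗ w) = ⟨v₁, v₂⟩ · (∑ j, ε_j e_j ⊗ e_{j'}) ⊗ w`. -/
def contractionSp (l r : ℕ) (_hr : 2 ≤ r) :
    TensorSpace k (2 * l) r →ₗ[k] TensorSpace k (2 * l) r :=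
  PiTensorProduct.lift
    (∑ i : Fin (2 * l), ∑ j : Fin (2 * l), (eps k l i * eps k l j) •
      (PiTensorProduct.tprod k).compLinearMap fun a : Fin r =>
        if a.val = 0 then (LinearMap.proj i).smulRight (stdVec k (2 * l) j)
        else if a.val = 1 then
          (LinearMap.proj (Fin.rev i)).smulRight (stdVec k (2 * l) (Fin.rev j))
        else LinearMap.id)

/-- The diagonal action of a matrix `g` on `V^{⊗r}`:
`g·(v_1 ⊗ ⋯ ⊗ v_r) = gv_1 ⊗ ⋯ ⊗ gv_r`. -/
def diagAction (n r : ℕ) (g : Matrix (Fin n) (Fin n) k) :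
    TensorSpace k n r →ₗ[k] TensorSpace k n r :=
  PiTensorProduct.map fun _ => g.mulVecLin

/-! ### Auxiliary lemmas -/

open Matrix

lemma eps_mul_eps_rev (l : ℕ) (a : Fin (2 * l)) :
    eps k l a * eps k l (Fin.rev a) = -1 := by
  have ha := a.isLt
  have hrev : (Fin.rev a : ℕ) = 2 * l - 1 - (a : ℕ) := by rw [Fin.val_rev]; omega
  unfold eps
  rcases lt_or_ge (a : ℕ) l with h | h
  · rw [if_pos h, if_neg (by omega), one_mul]
  · rw [if_neg (by omega), if_pos (by omega), mul_one]

/-- The Gram matrix `J` of the skew form. -/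
def Jm (l : ℕ) : Matrix (Fin (2 * l)) (Fin (2 * l)) k :=
  Matrix.of fun a b => if b = Fin.rev a then eps k l a else 0

lemma Jm_mul_Jm (l : ℕ) : Jm k l * Jm k l = -1 := by
  ext a b
  rw [Matrix.mul_apply]
  simp only [Jm, Matrix.of_apply, ite_mul, zero_mul, Finset.sum_ite_eq',
    Finset.mem_univ, if_true, Fin.rev_rev]
  rcases eq_or_ne b a with hba | hba
  · subst hba
    simp [eps_mul_eps_rev, Matrix.one_apply]
  · simp [hba, Matrix.one_apply, Ne.symm hba]

lemma Jm_mul (l : ℕ) (M : Matrix (Fin (2 * l)) (Fin (2 * l)) k) (c b : Fin (2 * l)) :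
    (Jm k l * M) c b = eps k l c * M (Fin.rev c) b := by
  rw [Matrix.mul_apply]
  simp [Jm, ite_mul]

lemma transpose_J_eq (l : ℕ) (G : Matrix (Fin (2 * l)) (Fin (2 * l)) k)
    (hg : ∀ u v : Fin (2 * l) → k,
      skewForm k l (G.mulVec u) (G.mulVec v) = skewForm k l u v) :
    Gᵀ * Jm k l * G = Jm k l := by
  rw [Matrix.mul_assoc]
  ext a b
  have := hg (Pi.single a 1) (Pi.single b 1)
  simp only [skewForm, Matrix.mulVec_single, mul_one, Pi.single_apply, MulOpposite.op_one, one_smul,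
    Matrix.col_apply] at this
  rw [Matrix.mul_apply]
  simp only [Matrix.transpose_apply, Jm_mul]
  calc (∑ c, G c a * (eps k l c * G (Fin.rev c) b))
      = ∑ c, eps k l c * (G c a * G (Fin.rev c) b) := by
        apply Finset.sum_congr rfl; intro c _; ring
    _ = ∑ i, eps k l i * ((if i = a then 1 else 0) * if Fin.rev i = b then 1 else 0) := this
    _ = if b = Fin.rev a then eps k l a else 0 := by
        rw [Finset.sum_eq_single a]
        · rcases eq_or_ne b (Fin.rev a) with h | h
          · simp [h]
          · simp [h, Ne.symm h]
        · intro c _ hc; simp [hc]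
        · simp
    _ = Jm k l a b := rfl

lemma rows_identity (l : ℕ) (g : Matrix.GeneralLinearGroup (Fin (2 * l)) k)
    (hg : ∀ u v : Fin (2 * l) → k,
      skewForm k l ((g : Matrix (Fin (2 * l)) (Fin (2 * l)) k).mulVec u)
          ((g : Matrix (Fin (2 * l)) (Fin (2 * l)) k).mulVec v) = skewForm k l u v)
    (a b : Fin (2 * l)) :
    (∑ c, eps k l c * ((g : Matrix (Fin (2 * l)) (Fin (2 * l)) k) a c *
        (g : Matrix (Fin (2 * l)) (Fin (2 * l)) k) b (Fin.rev c)))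
      = if b = Fin.rev a then eps k l a else 0 := by
  set G : Matrix (Fin (2 * l)) (Fin (2 * l)) k := (g : Matrix (Fin (2 * l)) (Fin (2 * l)) k)
  set J : Matrix (Fin (2 * l)) (Fin (2 * l)) k := Jm k l with hJdef
  have hJJ : J * J = -1 := Jm_mul_Jm k l
  have hJG : Gᵀ * J * G = J := transpose_J_eq k l G hg
  -- derive G * J * Gᵀ = J using invertibility of G
  have h1 : (-J * Gᵀ * J) * G = 1 := by
    calc (-J * Gᵀ * J) * G = -J * (Gᵀ * J * G) := by noncomm_ring
      _ = -J * J := by rw [hJG]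
      _ = 1 := by rw [neg_mul, hJJ, neg_neg]
  have h2 : G * (-J * Gᵀ * J) = 1 := mul_eq_one_comm.mp h1
  have hJJ' : J * (-J) = 1 := by rw [mul_neg, hJJ, neg_neg]
  have h3 : G * J * Gᵀ = J := by
    have h4 : (-(G * J * Gᵀ)) * J = 1 := by
      calc (-(G * J * Gᵀ)) * J = G * (-J * Gᵀ * J) := by
            simp only [neg_mul, mul_neg, Matrix.mul_assoc]
        _ = 1 := h2
    have h5 : -(G * J * Gᵀ) = -J := by
      calc -(G * J * Gᵀ) = (-(G * J * Gᵀ)) * (J * (-J)) := by rw [hJJ', mul_one]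
        _ = ((-(G * J * Gᵀ)) * J) * (-J) := (mul_assoc _ _ _).symm
        _ = 1 * (-J) := by rw [h4]
        _ = -J := one_mul _
    exact neg_inj.mp h5
  have := congrFun (congrFun (congrArg (fun M => M) h3) a) b
  calc (∑ c, eps k l c * (G a c * G b (Fin.rev c)))
      = (G * (J * Gᵀ)) a b := by
        rw [Matrix.mul_apply]
        apply Finset.sum_congr rfl
        intro c _
        rw [Jm_mul, Matrix.transpose_apply]
        ring
    _ = J a b := by rw [← Matrix.mul_assoc, h3]
    _ = if b = Fin.rev a then eps k l a else 0 := rfl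

section tensorAux

variable {l r : ℕ}

lemma vec_expand (n : ℕ) (x : Fin n → k) : x = ∑ a, x a • stdVec k n a := by
  funext j
  simp [stdVec, Pi.single_apply, Finset.sum_apply]

lemma if_fun_eq_update (h0 : 0 < r) (h1 : 1 < r) {V : Type*}
    (h₀ h₁ h₂ : Fin r → V) :
    (fun a : Fin r => if (a : ℕ) = 0 then h₀ a else if (a : ℕ) = 1 then h₁ a else h₂ a)
      = Function.update (Function.update (fun a => h₂ a) ⟨1, h1⟩ (h₁ ⟨1, h1⟩))
          ⟨0, h0⟩ (h₀ ⟨0, h0⟩) := by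
  funext a
  rcases eq_or_ne (a : ℕ) 0 with ha0 | ha0
  · have : a = ⟨0, h0⟩ := Fin.ext ha0
    subst this
    simp
  · rcases eq_or_ne (a : ℕ) 1 with ha1 | ha1
    · have : a = ⟨1, h1⟩ := Fin.ext ha1
      subst this
      simp [Function.update_apply, Fin.ext_iff]
    · have hne0 : a ≠ ⟨0, h0⟩ := by simp [Fin.ext_iff, ha0]
      have hne1 : a ≠ ⟨1, h1⟩ := by simp [Fin.ext_iff, ha1]
      simp [Function.update_apply, hne0, hne1, ha0, ha1]

lemma tprod_update_smul_smul (h0 : 0 < r) (h1 : 1 < r)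
    (f : Fin r → (Fin (2 * l) → k)) (c d : k) (x y : Fin (2 * l) → k) :
    (PiTensorProduct.tprod k)
        (Function.update (Function.update f ⟨1, h1⟩ (d • y)) ⟨0, h0⟩ (c • x))
      = (c * d) • (PiTensorProduct.tprod k)
          (Function.update (Function.update f ⟨1, h1⟩ y) ⟨0, h0⟩ x) := by
  have hne : (⟨0, h0⟩ : Fin r) ≠ ⟨1, h1⟩ := by simp [Fin.ext_iff]
  rw [MultilinearMap.map_update_smul, Function.update_comm hne.symm,
    MultilinearMap.map_update_smul, Function.update_comm hne, smul_smul]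

end tensorAux


lemma omega_invariant {l r : ℕ} (h0 : 0 < r) (h1 : 1 < r)
    (G : Matrix (Fin (2 * l)) (Fin (2 * l)) k)
    (hrow : ∀ a b : Fin (2 * l), (∑ c, eps k l c * (G a c * G b (Fin.rev c)))
      = if b = Fin.rev a then eps k l a else 0)
    (F : Fin r → (Fin (2 * l) → k)) :
    (∑ j, eps k l j • (PiTensorProduct.tprod k)
        (Function.update (Function.update F ⟨1, h1⟩
            (G.mulVecLin (stdVec k (2 * l) (Fin.rev j)))) ⟨0, h0⟩
          (G.mulVecLin (stdVec k (2 * l) j))))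
      = ∑ j, eps k l j • (PiTensorProduct.tprod k)
          (Function.update (Function.update F ⟨1, h1⟩ (stdVec k (2 * l) (Fin.rev j)))
            ⟨0, h0⟩ (stdVec k (2 * l) j)) := by
  have hne : (⟨0, h0⟩ : Fin r) ≠ ⟨1, h1⟩ := by simp [Fin.ext_iff]
  have hcol : ∀ j : Fin (2 * l),
      G.mulVecLin (stdVec k (2 * l) j) = ∑ a, G a j • stdVec k (2 * l) a := by
    intro j
    have h1' : G.mulVecLin (stdVec k (2 * l) j) = fun a => G a j := by
      simp [stdVec, Matrix.mulVecLin]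
      rfl
    rw [h1']
    exact vec_expand k (2 * l) _
  set T : Fin (2 * l) → Fin (2 * l) → TensorSpace k (2 * l) r := fun a b =>
    (PiTensorProduct.tprod k)
      (Function.update (Function.update F ⟨0, h0⟩ (stdVec k (2 * l) a)) ⟨1, h1⟩
        (stdVec k (2 * l) b)) with hT
  have step1 : ∀ j : Fin (2 * l),
      (PiTensorProduct.tprod k)
        (Function.update (Function.update F ⟨1, h1⟩
            (G.mulVecLin (stdVec k (2 * l) (Fin.rev j)))) ⟨0, h0⟩
          (G.mulVecLin (stdVec k (2 * l) j)))
      = ∑ a, ∑ b, (G a j * G b (Fin.rev j)) • T a b := by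
    intro j
    rw [hcol j, MultilinearMap.map_update_sum]
    refine Finset.sum_congr rfl fun a _ => ?_
    rw [MultilinearMap.map_update_smul, Function.update_comm hne.symm, hcol (Fin.rev j),
      MultilinearMap.map_update_sum, Finset.smul_sum]
    refine Finset.sum_congr rfl fun b _ => ?_
    rw [MultilinearMap.map_update_smul, smul_smul]
  calc (∑ j, eps k l j • (PiTensorProduct.tprod k)
        (Function.update (Function.update F ⟨1, h1⟩
            (G.mulVecLin (stdVec k (2 * l) (Fin.rev j)))) ⟨0, h0⟩
          (G.mulVecLin (stdVec k (2 * l) j))))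
      = ∑ j, ∑ a, ∑ b, (eps k l j * (G a j * G b (Fin.rev j))) • T a b := by
        refine Finset.sum_congr rfl fun j _ => ?_
        rw [step1 j, Finset.smul_sum]
        refine Finset.sum_congr rfl fun a _ => ?_
        rw [Finset.smul_sum]
        refine Finset.sum_congr rfl fun b _ => ?_
        rw [smul_smul]
    _ = ∑ a, ∑ b, (∑ j, eps k l j * (G a j * G b (Fin.rev j))) • T a b := by
        rw [Finset.sum_comm]
        refine Finset.sum_congr rfl fun a _ => ?_
        rw [Finset.sum_comm]
        refine Finset.sum_congr rfl fun b _ => ?_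
        rw [Finset.sum_smul]
    _ = ∑ a, ∑ b, (if b = Fin.rev a then eps k l a else 0) • T a b := by
        refine Finset.sum_congr rfl fun a _ => Finset.sum_congr rfl fun b _ => ?_
        rw [hrow a b]
    _ = ∑ a, eps k l a • T a (Fin.rev a) := by
        refine Finset.sum_congr rfl fun a _ => ?_
        simp only [ite_smul, zero_smul, Finset.sum_ite_eq', Finset.mem_univ, if_true]
    _ = ∑ j, eps k l j • (PiTensorProduct.tprod k)
          (Function.update (Function.update F ⟨1, h1⟩ (stdVec k (2 * l) (Fin.rev j)))
            ⟨0, h0⟩ (stdVec k (2 * l) j)) := by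
        refine Finset.sum_congr rfl fun j _ => ?_
        have : T j (Fin.rev j) = (PiTensorProduct.tprod k)
            (Function.update (Function.update F ⟨1, h1⟩ (stdVec k (2 * l) (Fin.rev j)))
              ⟨0, h0⟩ (stdVec k (2 * l) j)) := by
          rw [hT]
          exact Function.update_comm hne _ _ _ ▸ rfl
        rw [this]

/-- over any field, for `n = 2l` and every `g ∈ GL_n(k)`
preserving the skew-symmetric bilinear form, the symplectic contraction
operator commutes with the diagonal action of `g` on `(k^n)^{⊗r}`. -/
theorem contractionSp_commutes_symplectic (l r : ℕ) (hl : 0 < l) (hr : 2 ≤ r)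
    (g : Matrix.GeneralLinearGroup (Fin (2 * l)) k)
    (hg : ∀ u v : Fin (2 * l) → k,
      skewForm k l ((g : Matrix (Fin (2 * l)) (Fin (2 * l)) k).mulVec u)
          ((g : Matrix (Fin (2 * l)) (Fin (2 * l)) k).mulVec v)
        = skewForm k l u v) :
    ∀ x : TensorSpace k (2 * l) r,
      contractionSp k l r hr
          (diagAction k (2 * l) r (g : Matrix (Fin (2 * l)) (Fin (2 * l)) k) x)
        = diagAction k (2 * l) r (g : Matrix (Fin (2 * l)) (Fin (2 * l)) k)
            (contractionSp k l r hr x) := by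
  have h0 : 0 < r := by omega
  have h1 : 1 < r := by omega
  have hne : (⟨0, h0⟩ : Fin r) ≠ ⟨1, h1⟩ := by simp [Fin.ext_iff]
  set G : Matrix (Fin (2 * l)) (Fin (2 * l)) k :=
    (g : Matrix (Fin (2 * l)) (Fin (2 * l)) k) with hG
  suffices h : (contractionSp k l r hr).comp (diagAction k (2 * l) r G)
      = (diagAction k (2 * l) r G).comp (contractionSp k l r hr) by
    intro x
    exact LinearMap.congr_fun h x
  apply PiTensorProduct.ext
  apply MultilinearMap.ext
  intro v
  simp only [LinearMap.compMultilinearMap_apply, LinearMap.coe_comp, Function.comp_apply]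
  have hdiag : ∀ w : Fin r → (Fin (2 * l) → k),
      diagAction k (2 * l) r G ((PiTensorProduct.tprod k) w)
        = (PiTensorProduct.tprod k) fun a => G.mulVecLin (w a) := by
    intro w
    simp only [diagAction, PiTensorProduct.map_tprod]
  have hcontr : ∀ w : Fin r → (Fin (2 * l) → k),
      contractionSp k l r hr ((PiTensorProduct.tprod k) w)
        = ∑ i, ∑ j, ((eps k l i * eps k l j) * (w ⟨0, h0⟩ i * w ⟨1, h1⟩ (Fin.rev i))) •
            (PiTensorProduct.tprod k)
              (Function.update (Function.update w ⟨1, h1⟩ (stdVec k (2 * l) (Fin.rev j)))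
                ⟨0, h0⟩ (stdVec k (2 * l) j)) := by
    intro w
    rw [contractionSp, PiTensorProduct.lift.tprod, MultilinearMap.sum_apply]
    refine Finset.sum_congr rfl fun i _ => ?_
    rw [MultilinearMap.sum_apply]
    refine Finset.sum_congr rfl fun j _ => ?_
    rw [MultilinearMap.smul_apply, MultilinearMap.compLinearMap_apply]
    have harg : (fun a : Fin r =>
        ((if (a : ℕ) = 0 then (LinearMap.proj i).smulRight (stdVec k (2 * l) j)
          else if (a : ℕ) = 1 then
            (LinearMap.proj (Fin.rev i)).smulRight (stdVec k (2 * l) (Fin.rev j))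
          else LinearMap.id :
            (Fin (2 * l) → k) →ₗ[k] (Fin (2 * l) → k)) (w a)))
        = fun a : Fin r => if (a : ℕ) = 0 then (w a i) • stdVec k (2 * l) j
            else if (a : ℕ) = 1 then (w a (Fin.rev i)) • stdVec k (2 * l) (Fin.rev j)
            else w a := by
      funext a
      split_ifs <;> simp
    rw [harg, if_fun_eq_update h0 h1, tprod_update_smul_smul k h0 h1, smul_smul]
  rw [hdiag v, hcontr, hcontr v, map_sum]
  have hGupd : ∀ X Y : Fin (2 * l) → k,
      (fun a => G.mulVecLin
          ((Function.update (Function.update v ⟨1, h1⟩ Y) ⟨0, h0⟩ X) a))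
        = Function.update (Function.update (fun a => G.mulVecLin (v a)) ⟨1, h1⟩
            (G.mulVecLin Y)) ⟨0, h0⟩ (G.mulVecLin X) := by
    intro X Y
    funext a
    simp only [Function.update_apply]
    split_ifs <;> rfl
  have hrhs : ∀ i : Fin (2 * l),
      diagAction k (2 * l) r G
        (∑ j, ((eps k l i * eps k l j) * (v ⟨0, h0⟩ i * v ⟨1, h1⟩ (Fin.rev i))) •
          (PiTensorProduct.tprod k)
            (Function.update (Function.update v ⟨1, h1⟩ (stdVec k (2 * l) (Fin.rev j)))
              ⟨0, h0⟩ (stdVec k (2 * l) j)))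
      = ∑ j, ((eps k l i * eps k l j) * (v ⟨0, h0⟩ i * v ⟨1, h1⟩ (Fin.rev i))) •
          (PiTensorProduct.tprod k)
            (Function.update (Function.update (fun a => G.mulVecLin (v a)) ⟨1, h1⟩
                (G.mulVecLin (stdVec k (2 * l) (Fin.rev j)))) ⟨0, h0⟩
              (G.mulVecLin (stdVec k (2 * l) j))) := by
    intro i
    rw [map_sum]
    refine Finset.sum_congr rfl fun j _ => ?_
    rw [_root_.map_smul, hdiag, hGupd]
  simp only [hrhs]
  have factor : ∀ (s : Fin (2 * l) → k) (T : Fin (2 * l) → TensorSpace k (2 * l) r),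
      (∑ i, ∑ j, ((eps k l i * eps k l j) * s i) • T j)
        = (∑ i, eps k l i * s i) • (∑ j, eps k l j • T j) := by
    intro s T
    rw [Finset.sum_smul]
    refine Finset.sum_congr rfl fun i _ => ?_
    rw [Finset.smul_sum]
    refine Finset.sum_congr rfl fun j _ => ?_
    rw [smul_smul]
    congr 1
    ring
  rw [factor, factor]
  have hA : (∑ i, eps k l i * ((fun a => G.mulVecLin (v a)) ⟨0, h0⟩ i *
        (fun a => G.mulVecLin (v a)) ⟨1, h1⟩ (Fin.rev i)))
      = ∑ i, eps k l i * (v ⟨0, h0⟩ i * v ⟨1, h1⟩ (Fin.rev i)) := by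
    have := hg (v ⟨0, h0⟩) (v ⟨1, h1⟩)
    simpa [skewForm, Matrix.mulVecLin_apply] using this
  rw [hA, omega_invariant k h0 h1 G (rows_identity k l g hg)]


end
end
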